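/- arXiv:2107.11834 — 10 statements merged into one kernel-verified Lean document; each statement's English description precedes it below -/
import Mathlib

section
/- Let E be a vector space and (e_n)_{n∈ℕ} a sequence in E. If there exists a linear operator T from span{e_n : n∈ℕ} to E with T(e_n) = e_{n+1} for all n∈ℕ, and span{e_n : n∈ℕ} is infinite-dimensional, then the family (e_n)_{n∈ℕ} is linearly independent. -/
theorem stmt_0 {K : Type*} [Field K] {E : Type*} [AddCommGroup E] [Module K E]
    (e : ℕ → E)
    (hT : ∃ T : ↥(Submodule.span K (Set.range e)) →ₗ[K] E,
      ∀ n : ℕ, T ⟨e n, Submodule.subset_span (Set.mem_range_self n)⟩ = e (n + 1))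
    (hdim : ¬ Module.Finite K ↥(Submodule.span K (Set.range e))) :
    LinearIndependent K e := by
  obtain ⟨T, hTe⟩ := hT
  classical
  by_contra hnli
  rw [linearIndependent_iff'] at hnli
  push_neg at hnli
  obtain ⟨s, g, hsum, i₀, hi₀s, hgi₀⟩ := hnli
  -- let N be the largest index with nonzero coefficient
  set t := s.filter (fun i => g i ≠ 0) with ht
  have hi₀t : i₀ ∈ t := Finset.mem_filter.2 ⟨hi₀s, hgi₀⟩
  have htne : t.Nonempty := ⟨i₀, hi₀t⟩
  set N := t.max' htne with hN
  have hNt : N ∈ t := t.max'_mem htne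
  have hNs : N ∈ s := (Finset.mem_filter.1 hNt).1
  have hgN : g N ≠ 0 := (Finset.mem_filter.1 hNt).2
  set S := Submodule.span K (e '' Set.Iio N) with hS
  -- e N lies in the span of earlier terms
  have hNmem : e N ∈ S := by
    have h1 : g N • e N + ∑ i ∈ s.erase N, g i • e i = 0 := by
      rw [Finset.add_sum_erase s (fun i => g i • e i) hNs]; exact hsum
    have h3 : g N • e N = -(∑ i ∈ s.erase N, g i • e i) := by
      rw [eq_neg_iff_add_eq_zero]; exact h1
    have h2 : e N = (g N)⁻¹ • (-(∑ i ∈ s.erase N, g i • e i)) := by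
      rw [← h3, smul_smul, inv_mul_cancel₀ hgN, one_smul]
    rw [h2]
    refine S.smul_mem _ (S.neg_mem (Submodule.sum_mem _ ?_))
    intro i his
    by_cases hgi : g i = 0
    · rw [hgi, zero_smul]; exact S.zero_mem
    · have hit : i ∈ t := Finset.mem_filter.2 ⟨Finset.mem_of_mem_erase his, hgi⟩
      have hiN : i < N :=
        lt_of_le_of_ne (t.le_max' i hit) (Finset.ne_of_mem_erase his)
      exact S.smul_mem _ (Submodule.subset_span ⟨i, hiN, rfl⟩)
  -- the lifted sequence
  set eh : ℕ → ↥(Submodule.span K (Set.range e)) := fun n => ⟨e n, Submodule.subset_span (Set.mem_range_self n)⟩ with heh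
  set W : Submodule K ↥(Submodule.span K (Set.range e)) := Submodule.span K (eh '' Set.Iio N) with hW
  have hWmap : Submodule.map (Submodule.span K (Set.range e)).subtype W = S := by
    rw [hW, Submodule.map_span, hS, Set.image_image]
    rfl
  have hmemW : ∀ x : ↥(Submodule.span K (Set.range e)), x ∈ W ↔ (x : E) ∈ S := by
    intro x
    rw [← hWmap]
    constructor
    · intro h; exact ⟨x, h, rfl⟩
    · rintro ⟨y, hy, hyx⟩
      have : y = x := Subtype.ext hyx
      rwa [← this]
  have hTW : ∀ x : ↥(Submodule.span K (Set.range e)), (x : E) ∈ S → T x ∈ S := by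
    intro x hx
    have hxW : x ∈ W := (hmemW x).2 hx
    have : T x ∈ Submodule.map T W := ⟨x, hxW, rfl⟩
    have hle : Submodule.map T W ≤ S := by
      rw [hW, Submodule.map_span]
      apply Submodule.span_le.2
      rintro _ ⟨_, ⟨i, hiN, rfl⟩, rfl⟩
      rw [hTe i]
      rcases lt_or_eq_of_le (Nat.succ_le_of_lt hiN) with h | h
      · exact Submodule.subset_span ⟨i + 1, h, rfl⟩
      · have h' : i + 1 = N := h
        rw [h']; exact hNmem
    exact hle this
  -- all terms lie in S
  have key : ∀ m, e m ∈ S := by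
    intro m
    induction m with
    | zero =>
      rcases Nat.eq_zero_or_pos N with h | h
      · rw [← h]; exact hNmem
      · exact Submodule.subset_span ⟨0, h, rfl⟩
    | succ k ih =>
      rcases lt_trichotomy (k + 1) N with h | h | h
      · exact Submodule.subset_span ⟨k + 1, h, rfl⟩
      · rw [h]; exact hNmem
      · have : e (k + 1) = T (eh k) := (hTe k).symm
        rw [this]
        exact hTW (eh k) ih
  have hle : Submodule.span K (Set.range e) ≤ S := by
    apply Submodule.span_le.2
    rintro _ ⟨m, rfl⟩
    exact key m
  have hge : S ≤ Submodule.span K (Set.range e) := by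
    apply Submodule.span_le.2
    rintro _ ⟨i, _, rfl⟩
    exact Submodule.subset_span (Set.mem_range_self i)
  have hMS : Submodule.span K (Set.range e) = S := le_antisymm hle hge
  apply hdim
  rw [hMS]
  exact Module.Finite.span_of_finite K ((Set.finite_Iio N).image e)
end

section
/- Let (S,≤,∨) be a join-semilattice, p a projection on S, and (e_n)_{n∈ℕ}, (b_n)_{n∈ℕ} sequences in S such that (b_n) is monotone increasing and e_n ≤ p(b_{n+1}) for all n∈ℕ. Suppose there exist m₀ ∈ ℕ and a monotone map f : S → S with f(p(b_{m₀})) ≤ p(f(b_{m₀})), e_{n+1} ≤ f(e_n) for all n∈ℕ, and f(b_{m₀}) ≤ ⋁_{i=0}^{m₀} e_i. Then e_{m₀} ≤ p(b_{m₀}) implies e_{m₀+n} ≤ p(b_{m₀}) for all n∈ℕ. -/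
theorem stmt_3 {S : Type*} [SemilatticeSup S] (p : S → S)
    (hp_mono : Monotone p) (hp_idem : ∀ x, p (p x) = p x)
    (e : ℕ → S) (b : ℕ → S) (hb : Monotone b)
    (heb : ∀ n : ℕ, e n ≤ p (b (n + 1)))
    (m₀ : ℕ) (f : S → S) (hf_mono : Monotone f)
    (h1 : f (p (b m₀)) ≤ p (f (b m₀)))
    (h2 : ∀ n : ℕ, e (n + 1) ≤ f (e n))
    (h3 : f (b m₀) ≤ (Finset.range (m₀ + 1)).sup' (by simp) e) :
    e m₀ ≤ p (b m₀) → ∀ n : ℕ, e (m₀ + n) ≤ p (b m₀) := by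
  intro h0
  have hsup : (Finset.range (m₀ + 1)).sup' (by simp) e ≤ p (b m₀) := by
    apply Finset.sup'_le
    intro i hi
    rcases Nat.lt_succ_iff_lt_or_eq.mp (Finset.mem_range.mp hi) with h | h
    · exact le_trans (heb i) (hp_mono (hb h))
    · exact h ▸ h0
  intro n
  induction n with
  | zero => simpa using h0
  | succ n ih =>
    calc e (m₀ + (n + 1)) ≤ f (e (m₀ + n)) := h2 _
      _ ≤ f (p (b m₀)) := hf_mono ih
      _ ≤ p (f (b m₀)) := h1
      _ ≤ p (p (b m₀)) := hp_mono (le_trans h3 hsup)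
      _ = p (b m₀) := hp_idem _
end

section
/- Let I be an infinite set, a ∈ I, and φ : I → I with Orb_φ(a) = I. Then for every b ∈ I, the orbit Orb_φ(b) is cofinite in I. -/
theorem stmt_10 {I : Type*} [Infinite I] (a : I) (φ : I → I)
    (ha : Set.range (fun n : ℕ => φ^[n] a) = Set.univ) :
    ∀ b : I, (Set.range fun n : ℕ => φ^[n] b)ᶜ.Finite := by
  intro b
  obtain ⟨k, hk⟩ := Set.range_eq_univ.mp ha b
  apply Set.Finite.subset (Set.finite_range (fun i : Fin k => φ^[(i : ℕ)] a))
  intro x hx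
  have hx2 : x ∈ Set.range (fun n : ℕ => φ^[n] a) := ha ▸ Set.mem_univ x
  obtain ⟨m, hm⟩ := hx2
  by_cases h : m < k
  · exact ⟨⟨m, h⟩, hm⟩
  · exfalso
    apply hx
    refine ⟨m - k, ?_⟩
    simp only
    rw [← hk, ← Function.iterate_add_apply, Nat.sub_add_cancel (le_of_not_gt h)]
    exact hm
end

section
/- Let I be an infinite set and φ : I → I such that Orb_φ(a) is infinite for every a ∈ I. If there exists a ∈ I with Orb_φ(a) = I, then there exist functions u : 𝒫_{ω,*}(I) → I and G : 𝒫_{ω,*}(I) → 𝒫_{ω,*}(I) such that for every nonempty finite subset I* of I: u(I*) ∈ I*, I* ⊆ G(I*), and φ(G(I*) \ {u(I*)}) ⊆ G(I*). -/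
theorem stmt_11 {I : Type*} [Infinite I] (φ : I → I)
    (horb : ∀ a : I, (Set.range fun n : ℕ => φ^[n] a).Infinite)
    (h : ∃ a : I, Set.range (fun n : ℕ => φ^[n] a) = Set.univ) :
    ∃ (u : Finset I → I) (G : Finset I → Finset I),
      ∀ s : Finset I, s.Nonempty →
        u s ∈ s ∧ s ⊆ G s ∧ ∀ i ∈ G s, i ≠ u s → φ i ∈ G s := by
  classical
  obtain ⟨a, ha⟩ := h
  set e : ℕ → I := fun n => φ^[n] a with he
  have hinj : Function.Injective e := by
    intro m n hmn
    by_contra hne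
    wlog hlt : m < n generalizing m n
    · exact this hmn.symm (Ne.symm hne) (by omega)
    -- periodicity: for p ≥ m, e (p + (n - m)) = e p
    have hper : ∀ p, m ≤ p → e (p + (n - m)) = e p := by
      intro p hp
      have h1 : p + (n - m) = (p - m) + n := by omega
      have h2 : (p - m) + m = p := by omega
      simp only [he] at hmn ⊢
      rw [h1, Function.iterate_add_apply, ← hmn, ← Function.iterate_add_apply, h2]
    -- every e k equals e j for some j < n
    have hall : ∀ k, ∃ j, j < n ∧ e j = e k := by
      intro k
      induction k using Nat.strong_induction_on with
      | _ k ih =>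
        by_cases hk : k < n
        · exact ⟨k, hk, rfl⟩
        · have hkm : m ≤ k - (n - m) := by omega
          obtain ⟨j, hj, hje⟩ := ih (k - (n - m)) (by omega)
          refine ⟨j, hj, ?_⟩
          have hkk := hper (k - (n - m)) hkm
          rw [show k - (n - m) + (n - m) = k by omega] at hkk
          rw [hje, hkk]
    have hfin : (Set.range e).Finite := by
      apply Set.Finite.subset (Set.Finite.image e (Set.finite_Iio n))
      rintro x ⟨k, rfl⟩
      obtain ⟨j, hj, hje⟩ := hall k
      exact ⟨j, hj, hje⟩
    exact horb a hfin
  have hsurj : Function.Surjective e := Set.range_eq_univ.mp ha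
  set eq : ℕ ≃ I := Equiv.ofBijective e ⟨hinj, hsurj⟩ with heq
  set d : I → ℕ := fun x => eq.symm x with hd
  have hed : ∀ x, e (d x) = x := fun x => eq.apply_symm_apply x
  refine ⟨fun s => e (s.sup d), fun s => (Finset.range (s.sup d + 1)).image e, ?_⟩
  intro s hs
  obtain ⟨x, hx, hxsup⟩ := Finset.exists_mem_eq_sup s hs d
  refine ⟨?_, ?_, ?_⟩
  · show e (s.sup d) ∈ s
    rw [hxsup, hed]; exact hx
  · intro y hy
    simp only [Finset.mem_image, Finset.mem_range]
    exact ⟨d y, Nat.lt_succ_of_le (Finset.le_sup hy), hed y⟩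
  · intro i hi hne
    simp only [Finset.mem_image, Finset.mem_range] at hi ⊢
    obtain ⟨k, hk, rfl⟩ := hi
    have hne' : e k ≠ e (s.sup d) := hne
    have hklt : k < s.sup d := by
      rcases Nat.lt_trichotomy k (s.sup d) with h' | h' | h'
      · exact h'
      · exact absurd (congrArg e h') hne'
      · omega
    refine ⟨k + 1, by omega, ?_⟩
    show e (k + 1) = φ (e k)
    exact Function.iterate_succ_apply' φ k a
end

section
/- Let E be an infinite-dimensional vector space, I a countably infinite set, (e_i)_{i∈I} a family in E, and φ : I → I. Suppose φ admits a ∈ I with Orb_φ(a) = I, that there exists a linear operator T from span{e_i : i∈I} to E with T(e_i) = e_{φ(i)} for all i∈I, and that span{e_i : i∈I} is infinite-dimensional. Then (e_i)_{i∈I} is linearly independent. -/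
theorem stmt_12 {K : Type*} [Field K] {E : Type*} [AddCommGroup E] [Module K E]
    (hE : ¬ Module.Finite K E)
    {I : Type*} [Countable I] [Infinite I]
    (e : I → E) (φ : I → I)
    (horb : ∃ a : I, Set.range (fun n : ℕ => φ^[n] a) = Set.univ)
    (hT : ∃ T : ↥(Submodule.span K (Set.range e)) →ₗ[K] E,
      ∀ i : I, T ⟨e i, Submodule.subset_span (Set.mem_range_self i)⟩ = e (φ i))
    (hdim : ¬ Module.Finite K ↥(Submodule.span K (Set.range e))) :
    LinearIndependent K e := by
  obtain ⟨a, ha⟩ := horb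
  obtain ⟨T, hTe⟩ := hT
  set o : ℕ → I := fun n => φ^[n] a with ho
  set f : ℕ → E := fun n => e (o n) with hf
  -- range f = range e
  have hrange : Set.range f = Set.range e := by
    have h1 : Set.range f = e '' Set.range o := (Set.range_comp e o)
    rw [h1, ha, Set.image_univ]
  have hmem : ∀ n, f n ∈ Submodule.span K (Set.range e) := fun n =>
    Submodule.subset_span (hrange ▸ Set.mem_range_self n)
  -- T shifts f
  have hTf : ∀ n (h : f n ∈ Submodule.span K (Set.range e)),
      T ⟨f n, h⟩ = f (n + 1) := by
    intro n h
    have h2 := hTe (o n)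
    have h3 : f (n + 1) = e (φ (o n)) := by
      simp only [hf, ho, Function.iterate_succ_apply']
    rw [h3, ← h2]
  -- Key: no f N lies in the span of earlier ones
  have hA : ∀ N : ℕ, f N ∈ Submodule.span K (f '' Set.Iio N) → False := by
    intro N hN
    set S := Submodule.span K (f '' Set.Iio N) with hS
    have hSle : S ≤ Submodule.span K (Set.range e) := by
      rw [hS]
      apply Submodule.span_le.mpr
      rintro _ ⟨n, -, rfl⟩
      exact hmem n
    -- T maps S into S
    have hstep : ∀ x ∈ S, ∀ h : x ∈ Submodule.span K (Set.range e), T ⟨x, h⟩ ∈ S := by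
      intro x hx
      induction hx using Submodule.span_induction with
      | mem y hy =>
        obtain ⟨n, hn, rfl⟩ := hy
        intro h
        rw [hTf n h]
        rcases lt_or_eq_of_le (Nat.succ_le_of_lt hn) with h' | h'
        · exact Submodule.subset_span ⟨n + 1, h', rfl⟩
        · rw [show n + 1 = N from h']; exact hN
      | zero =>
        intro h
        have : (⟨(0 : E), h⟩ : ↥(Submodule.span K (Set.range e))) = 0 := rfl
        rw [this, map_zero]; exact Submodule.zero_mem S
      | add y z hy hz ihy ihz =>
        intro h
        have hy' : y ∈ Submodule.span K (Set.range e) := hSle hy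
        have hz' : z ∈ Submodule.span K (Set.range e) := hSle hz
        have : (⟨y + z, h⟩ : ↥(Submodule.span K (Set.range e)))
            = ⟨y, hy'⟩ + ⟨z, hz'⟩ := rfl
        rw [this, map_add]
        exact Submodule.add_mem S (ihy hy') (ihz hz')
      | smul c y hy ihy =>
        intro h
        have hy' : y ∈ Submodule.span K (Set.range e) := hSle hy
        have : (⟨c • y, h⟩ : ↥(Submodule.span K (Set.range e))) = c • ⟨y, hy'⟩ := rfl
        rw [this, map_smul]
        exact Submodule.smul_mem S c (ihy hy')
    -- all f m lie in S
    have hall : ∀ m, f m ∈ S := by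
      intro m
      rcases lt_or_ge m N with h | h
      · exact Submodule.subset_span ⟨m, h, rfl⟩
      · obtain ⟨k, rfl⟩ := Nat.exists_eq_add_of_le h
        clear h
        induction k with
        | zero => exact hN
        | succ k ih =>
          have := hstep (f (N + k)) ih (hmem (N + k))
          rwa [hTf (N + k) (hmem (N + k))] at this
    have hle : Submodule.span K (Set.range e) ≤ S := by
      rw [← hrange]
      apply Submodule.span_le.mpr
      rintro _ ⟨n, rfl⟩
      exact hall n
    have hfin : FiniteDimensional K S :=
      FiniteDimensional.span_of_finite K ((Set.finite_Iio N).image f)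
    exact hdim (Submodule.finiteDimensional_of_le hle)
  -- o is injective
  have haux : ∀ i j : ℕ, i < j → o i = o j → False := by
    intro i j hij heq
    have hcl : ∀ n, ∃ m, m < j ∧ o m = o n := by
      intro n
      induction n using Nat.strong_induction_on with
      | _ n ih =>
        by_cases hn : n < j
        · exact ⟨n, hn, rfl⟩
        · push_neg at hn
          have h1 : o n = o (n - j + i) := by
            have e1 : o n = φ^[n - j] (o j) := by
              simp only [ho, ← Function.iterate_add_apply]
              congr 1
              omega
            have e2 : φ^[n - j] (o i) = o (n - j + i) := by
              simp only [ho, ← Function.iterate_add_apply]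
            rw [e1, ← heq, e2]
          obtain ⟨m, hm, hmo⟩ := ih (n - j + i) (by omega)
          exact ⟨m, hm, by rw [hmo, ← h1]⟩
    have hro : Set.range o ⊆ o '' Set.Iio j := by
      rintro _ ⟨n, rfl⟩
      obtain ⟨m, hm, hmo⟩ := hcl n
      exact ⟨m, hm, hmo⟩
    have hfin : (Set.range e).Finite := by
      rw [← hrange]
      have : Set.range f ⊆ f '' Set.Iio j := by
        rintro _ ⟨n, rfl⟩
        obtain ⟨m, hm, hmo⟩ := hcl n
        exact ⟨m, hm, by simp only [hf, hmo]⟩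
      exact Set.Finite.subset ((Set.finite_Iio j).image f) this
    exact hdim (FiniteDimensional.span_of_finite K hfin)
  have hinj : Function.Injective o := by
    intro i j hij
    rcases lt_trichotomy i j with h | h | h
    · exact absurd hij (fun hh => haux i j h hh)
    · exact h
    · exact absurd hij.symm (fun hh => haux j i h hh)
  have hsurj : Function.Surjective o := Set.range_eq_univ.mp ha
  -- f is linearly independent
  have hLIf : LinearIndependent K f := by
    by_contra hLI
    rw [linearIndependent_iff] at hLI
    push_neg at hLI
    obtain ⟨l, hl0, hlne⟩ := hLI
    have hsupp : l.support.Nonempty := Finsupp.support_nonempty_iff.mpr hlne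
    set N := l.support.max' hsupp with hNdef
    have hNmem : N ∈ l.support := l.support.max'_mem hsupp
    have hlN : l N ≠ 0 := Finsupp.mem_support_iff.mp hNmem
    have hsum : ∑ n ∈ l.support, l n • f n = 0 := by
      rw [← hl0]
      rw [Finsupp.linearCombination_apply, Finsupp.sum]
    rw [← Finset.add_sum_erase _ _ hNmem] at hsum
    have hfN : f N = (l N)⁻¹ • (-(∑ n ∈ l.support.erase N, l n • f n)) := by
      have : l N • f N = -(∑ n ∈ l.support.erase N, l n • f n) := by
        linear_combination (norm := module) hsum
      rw [← this, smul_smul, inv_mul_cancel₀ hlN, one_smul]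
    apply hA N
    rw [hfN]
    apply Submodule.smul_mem
    apply Submodule.neg_mem
    apply Submodule.sum_mem
    intro n hn
    apply Submodule.smul_mem
    apply Submodule.subset_span
    refine ⟨n, ?_, rfl⟩
    have hne : n ≠ N := (Finset.mem_erase.mp hn).1
    have hle : n ≤ N := Finset.le_max' _ _ (Finset.mem_of_mem_erase hn)
    exact lt_of_le_of_ne hle hne
  exact (linearIndependent_equiv (Equiv.ofBijective o ⟨hinj, hsurj⟩)).mp hLIf
end

section
/- Let E be an infinite-dimensional vector space and I a countably infinite set. Let φ : I → I be such that for every family (e_i)_{i∈I} in E the following implication P((e_i), φ) holds: if there exists a linear operator T from span{e_i : i∈I} to E with T(e_i) = e_{φ(i)} for all i∈I and span{e_i : i∈I} is infinite-dimensional, then (e_i)_{i∈I} is linearly independent. Then there exists a ∈ I with Orb_φ(a) = I. -/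
/-!
Fix an independent family `v : I → E`. A family `e` that agrees with `v` on an infinite set spans
an infinite-dimensional space, and `F (v i) = e (φ i)` defines a linear map `F`; whenever
`F ∘ e = e ∘ φ` as well, the hypothesis makes `e` independent. Replacing `v b` by `v a` where
`φ a = φ b` shows that `φ` is injective, and replacing `v` by `0` on an orbit shows that every
orbit is cofinite. For an injective map with cofinite orbits, an orbit `O` with smallest complement
is everything: the orbit of a point outside `O` would meet `O`, hence contain it, and so have a
smaller complement.
-/

open Function Set Submodule

namespace Function

variable {α : Type*} {f : α → α} {a b : α}

def forwardOrbit (f : α → α) (a : α) : Set α := range fun n : ℕ => f^[n] a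

theorem self_mem_forwardOrbit (f : α → α) (a : α) : a ∈ forwardOrbit f a := ⟨0, rfl⟩

theorem mapsTo_forwardOrbit (f : α → α) (a : α) :
    MapsTo f (forwardOrbit f a) (forwardOrbit f a) := by
  rintro _ ⟨n, rfl⟩
  exact ⟨n + 1, iterate_succ_apply' f n a⟩

theorem forwardOrbit_subset_of_mem (h : b ∈ forwardOrbit f a) :
    forwardOrbit f b ⊆ forwardOrbit f a := by
  obtain ⟨m, rfl⟩ := h
  rintro _ ⟨n, rfl⟩
  exact ⟨n + m, iterate_add_apply f n m a⟩

theorem Injective.mem_forwardOrbit_or_mem_of_not_disjoint (hf : Injective f)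
    (h : ¬Disjoint (forwardOrbit f a) (forwardOrbit f b)) :
    a ∈ forwardOrbit f b ∨ b ∈ forwardOrbit f a := by
  obtain ⟨_, ⟨m, rfl⟩, ⟨n, hn : f^[n] b = f^[m] a⟩⟩ := not_disjoint_iff.mp h
  rcases le_total m n with hmn | hnm
  · left
    refine ⟨n - m, hf.iterate m ?_⟩
    rw [← iterate_add_apply, Nat.add_sub_cancel' hmn]; exact hn
  · right
    refine ⟨m - n, hf.iterate n ?_⟩
    rw [← iterate_add_apply, Nat.add_sub_cancel' hnm]; exact hn.symm

theorem Injective.exists_forwardOrbit_eq_univ [Infinite α] (hf : Injective f)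
    (h : ∀ a, (forwardOrbit f a)ᶜ.Finite) : ∃ a, forwardOrbit f a = univ := by
  let a := argmin (fun a => (forwardOrbit f a)ᶜ.ncard)
  refine ⟨a, eq_univ_of_forall fun b => by_contra fun hb => ?_⟩
  have hmeet : ¬Disjoint (forwardOrbit f a) (forwardOrbit f b) := fun hdisj => by
    have ha_inf : (forwardOrbit f a).Infinite := by simpa using (h a).infinite_compl
    exact ha_inf ((h b).subset hdisj.subset_compl_right)
  have hab : forwardOrbit f a ⊆ forwardOrbit f b := forwardOrbit_subset_of_mem
    ((hf.mem_forwardOrbit_or_mem_of_not_disjoint hmeet).resolve_right hb)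
  have hlt : (forwardOrbit f b)ᶜ ⊂ (forwardOrbit f a)ᶜ :=
    (ssubset_iff_of_subset (compl_subset_compl.mpr hab)).mpr
      ⟨b, hb, not_not.mpr (self_mem_forwardOrbit f b)⟩
  exact (ncard_lt_ncard hlt (h a)).not_ge (argmin_le (fun a => (forwardOrbit f a)ᶜ.ncard) b)

end Function

theorem LinearIndependent.exists_linearMap_apply_eq {K V W ι : Type*} [Field K]
    [AddCommGroup V] [Module K V] [AddCommGroup W] [Module K W] {v : ι → V}
    (hv : LinearIndependent K v) (w : ι → W) : ∃ F : V →ₗ[K] W, ∀ i, F (v i) = w i := by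
  obtain ⟨F, hF⟩ := LinearMap.exists_extend ((Module.Basis.span hv).constr K w)
  refine ⟨F, fun i => ?_⟩
  have hFi := LinearMap.congr_fun hF (Module.Basis.span hv i)
  rwa [LinearMap.comp_apply, Module.Basis.constr_basis, Submodule.subtype_apply,
    Module.Basis.span_apply] at hFi

theorem LinearIndependent.not_finite_span_range_of_eqOn {R M ι : Type*} [Ring R]
    [StrongRankCondition R] [AddCommGroup M] [Module R M] {v e : ι → M} {s : Set ι}
    (hv : LinearIndependent R v) (hs : s.Infinite) (he : EqOn e v s) :
    ¬Module.Finite R (span R (range e)) := fun _ => by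
  have : Infinite s := hs.to_subtype
  refine Module.Finite.not_linearIndependent_of_infinite (R := R)
    (fun j : s => (⟨e j, subset_span (mem_range_self _)⟩ : span R (range e))) ?_
  refine LinearIndependent.of_comp (span R (range e)).subtype ?_
  have heq : (span R (range e)).subtype ∘
      (fun j : s => (⟨e j, subset_span (mem_range_self _)⟩ : span R (range e))) =
      fun j : s => v j := funext fun j => he j.2
  rw [heq]
  exact hv.comp _ Subtype.val_injective

theorem exists_linearIndependent_of_not_finite {K V : Type*} [DivisionRing K] [AddCommGroup V]
    [Module K V] (ι : Type*) [Countable ι] (hV : ¬Module.Finite K V) :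
    ∃ v : ι → V, LinearIndependent K v := by
  let b := Module.Basis.ofVectorSpace K V
  have : Infinite (Module.Basis.ofVectorSpaceIndex K V) :=
    not_finite_iff_infinite.mp fun _ => hV (Module.Finite.of_basis b)
  obtain ⟨g, hg⟩ := Countable.exists_injective_nat ι
  exact ⟨b ∘ Infinite.natEmbedding _ ∘ g,
    b.linearIndependent.comp _ ((Infinite.natEmbedding _).injective.comp hg)⟩

def SemiconjImpliesLinearIndependent (K E : Type*) [Field K] [AddCommGroup E] [Module K E]
    {I : Type*} (φ : I → I) : Prop :=
  ∀ e : I → E, (∃ F : E →ₗ[K] E, Semiconj e φ F) →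
    ¬Module.Finite K (span K (range e)) → LinearIndependent K e

namespace SemiconjImpliesLinearIndependent

variable {K E I : Type*} [Field K] [AddCommGroup E] [Module K E] {φ : I → I} {v : I → E}

theorem injective [Infinite I] (hφ : SemiconjImpliesLinearIndependent K E φ)
    (hv : LinearIndependent K v) : Injective φ := by
  classical
  intro a b hab
  by_contra hne
  obtain ⟨F, hF⟩ := hv.exists_linearMap_apply_eq (update v b (v a) ∘ φ)
  have hsemi : Semiconj (update v b (v a)) φ F := fun i => by
    rcases eq_or_ne i b with rfl | hi
    · rw [update_self, hF, comp_apply, hab]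
    · rw [update_of_ne hi, hF, comp_apply]
  have heq : EqOn (update v b (v a)) v {b}ᶜ := fun i hi => update_of_ne hi _ _
  have hli := hφ _ ⟨F, hsemi⟩
    (hv.not_finite_span_range_of_eqOn (finite_singleton b).infinite_compl heq)
  exact hne (hli.injective (by rw [update_self, update_of_ne hne]))

theorem finite_compl_forwardOrbit (hφ : SemiconjImpliesLinearIndependent K E φ)
    (hv : LinearIndependent K v) (a : I) : (forwardOrbit φ a)ᶜ.Finite := by
  classical
  by_contra hinf
  obtain ⟨F, hF⟩ := hv.exists_linearMap_apply_eq ((forwardOrbit φ a)ᶜ.indicator v ∘ φ)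
  have hsemi : Semiconj ((forwardOrbit φ a)ᶜ.indicator v) φ F := fun i => by
    by_cases hi : i ∈ forwardOrbit φ a
    · rw [indicator_of_notMem (not_not.mpr (mapsTo_forwardOrbit φ a hi)),
        indicator_of_notMem (not_not.mpr hi), map_zero]
    · rw [indicator_of_mem (mem_compl hi), hF, comp_apply]
  have heq : EqOn ((forwardOrbit φ a)ᶜ.indicator v) v (forwardOrbit φ a)ᶜ :=
    fun i hi => indicator_of_mem hi v
  have hli := hφ _ ⟨F, hsemi⟩ (hv.not_finite_span_range_of_eqOn hinf heq)
  exact hli.ne_zero a (indicator_of_notMem (not_not.mpr (self_mem_forwardOrbit φ a)) v)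

end SemiconjImpliesLinearIndependent

theorem stmt_13 {K : Type*} [Field K] {E : Type*} [AddCommGroup E] [Module K E]
    (hE : ¬ Module.Finite K E)
    {I : Type*} [Countable I] [Infinite I]
    (φ : I → I)
    (hP : ∀ e : I → E,
      (∃ T : ↥(Submodule.span K (Set.range e)) →ₗ[K] E,
        ∀ i : I, T ⟨e i, Submodule.subset_span (Set.mem_range_self i)⟩ = e (φ i)) →
      ¬ Module.Finite K ↥(Submodule.span K (Set.range e)) →
      LinearIndependent K e) :
    ∃ a : I, Set.range (fun n : ℕ => φ^[n] a) = Set.univ := by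
  have hφ : SemiconjImpliesLinearIndependent K E φ := fun e ⟨F, hF⟩ =>
    hP e ⟨F.domRestrict _, fun i => (hF i).symm⟩
  obtain ⟨v, hv⟩ := exists_linearIndependent_of_not_finite (K := K) I hE
  exact (hφ.injective hv).exists_forwardOrbit_eq_univ (hφ.finite_compl_forwardOrbit hv)
end

section
/- Let E be an infinite-dimensional vector space and I a countably infinite set. For φ : I → I, the following are equivalent: (1) for every family (e_i)_{i∈I} in E, the existence of a linear operator T : span{e_i}_{i∈I} → E with T(e_i) = e_{φ(i)} for all i∈I together with span{e_i}_{i∈I} being infinite-dimensional implies (e_i)_{i∈I} is linearly independent; (2) there exists a ∈ I with Orb_φ(a) = I. -/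
/-!
Direction (2) ⇒ (1): if the orbit of `a` is all of `I`, then `n ↦ φⁿ(a)` enumerates `I`, and the
family becomes a sequence `fₙ` with `T fₙ = fₙ₊₁`. A first linear relation `f_N ∈ span (f₀, …, f_{N-1})`
would make this finite span `T`-invariant, so it would contain every `fₙ`.

Direction (1) ⇒ (2): with an infinite independent family `u` in `E` one builds counterexamples to (1).
If `φ x = φ y` with `x ≠ y`, replace `u y` by `u x`; if the orbit of `a` has infinite complement,
replace `u` by `0` on that (forward invariant) orbit. Hence `φ` is injective and all orbits are
cofinite. Cofinite orbits are infinite, so `φ` has no periodic points; a surjective `φ` would then map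
the finite complement `F` of the orbit of `a` onto `F ∪ {a}`. So some `c ∉ range φ` exists, and by
injectivity the orbit of `c` contains every orbit it meets, which is every orbit.
-/

open Function Set Submodule

section Orbit

variable {α : Type*} {f : α → α}

lemma finite_range_iterate_of_iterate_eq {x : α} {m n : ℕ} (hmn : m < n)
    (h : f^[m] x = f^[n] x) : (range fun k => f^[k] x).Finite := by
  refine ((finite_Iio n).image fun k => f^[k] x).subset (range_subset_iff.2 fun k => ?_)
  induction k using Nat.strong_induction_on with
  | _ k ih =>
    rcases lt_or_ge k n with hk | hk
    · exact ⟨k, hk, rfl⟩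
    · have hshift : f^[k] x = f^[k - n + m] x := by
        rw [iterate_add_apply, h, ← iterate_add_apply, Nat.sub_add_cancel hk]
      rw [hshift]
      exact ih _ (by omega)

lemma injective_iterate_of_infinite_range {x : α} (h : (range fun n => f^[n] x).Infinite) :
    Injective fun n => f^[n] x := by
  intro m n hmn
  by_contra hne
  rcases lt_or_gt_of_ne hne with hlt | hlt
  exacts [h (finite_range_iterate_of_iterate_eq hlt hmn),
    h (finite_range_iterate_of_iterate_eq hlt hmn.symm)]

lemma mem_range_iterate_of_iterate_eq (hinj : Injective f) {c : α} (hc : c ∉ range f) :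
    ∀ (m n : ℕ) (y : α), f^[n] c = f^[m] y → y ∈ range fun k => f^[k] c := by
  intro m
  induction m with
  | zero => exact fun n y h => ⟨n, h⟩
  | succ m ih =>
    rintro (_ | n) y h
    · exact absurd ⟨_, (h.trans (iterate_succ_apply' f m y)).symm⟩ hc
    · rw [iterate_succ_apply', iterate_succ_apply'] at h
      exact ih n y (hinj h)

variable [Infinite α] (hcof : ∀ x, (range fun n => f^[n] x)ᶜ.Finite)
include hcof

lemma not_surjective_of_finite_compl_range_iterate : ¬ Surjective f := by
  intro hsurj
  obtain ⟨a⟩ := (inferInstance : Nonempty α)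
  set F := (range fun n => f^[n] a)ᶜ
  have hperiodic : ∀ n, f^[n + 1] a ≠ a := fun n h =>
    (Nat.succ_ne_zero n) (injective_iterate_of_infinite_range
      (by simpa using (hcof a).infinite_compl) h)
  -- A preimage of a point of `insert a F` cannot lie on the orbit, whose image misses `a` and `F`.
  have hsub : insert a F ⊆ f '' F := by
    intro z hz
    obtain ⟨w, rfl⟩ := hsurj z
    refine ⟨w, fun ⟨n, hn⟩ => ?_, rfl⟩
    have hfw : f w = f^[n + 1] a := by rw [iterate_succ_apply']; exact congrArg f hn.symm
    rcases hz with hz | hz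
    · exact hperiodic n (hfw ▸ hz)
    · exact hz ⟨n + 1, hfw.symm⟩
  have ha : a ∉ F := not_not.2 ⟨0, rfl⟩
  have := (ncard_le_ncard hsub ((hcof a).image f)).trans (ncard_image_le (hcof a))
  rw [ncard_insert_of_notMem ha (hcof a)] at this
  omega

theorem exists_range_iterate_eq_univ (hinj : Injective f) :
    ∃ c, range (fun n => f^[n] c) = univ := by
  obtain ⟨c, hc⟩ : ∃ c, c ∉ range f := by
    simpa [Surjective] using not_surjective_of_finite_compl_range_iterate hcof
  refine ⟨c, eq_univ_of_forall fun y => ?_⟩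
  have hfin : ((range fun n => f^[n] c) ∩ range fun m => f^[m] y)ᶜ.Finite := by
    rw [compl_inter]
    exact (hcof c).union (hcof y)
  have hmeet := hfin.infinite_compl
  rw [compl_compl] at hmeet
  obtain ⟨_, ⟨n, rfl⟩, m, hm⟩ := hmeet.nonempty
  exact mem_range_iterate_of_iterate_eq hinj hc m n y hm.symm

end Orbit

section LinearAlgebra

variable {K E F ι : Type*} [Field K] [AddCommGroup E] [Module K E] [AddCommGroup F] [Module K F]

lemma exists_linearMap_span_iff (e : ι → E) (g : ι → F) :
    (∃ T : span K (range e) →ₗ[K] F, ∀ i, T ⟨e i, subset_span (mem_range_self i)⟩ = g i) ↔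
      ∃ T : E →ₗ[K] F, ∀ i, T (e i) = g i := by
  constructor
  · rintro ⟨T, hT⟩
    obtain ⟨T', hT'⟩ := LinearMap.exists_extend T
    exact ⟨T', fun i => by rw [← hT i, ← hT']; rfl⟩
  · rintro ⟨T, hT⟩
    exact ⟨T ∘ₗ (span K (range e)).subtype, hT⟩

lemma LinearIndependent.exists_linearMap {u : ι → E} (hu : LinearIndependent K u) (g : ι → F) :
    ∃ T : E →ₗ[K] F, ∀ i, T (u i) = g i :=
  (exists_linearMap_span_iff u g).1
    ⟨(Module.Basis.span hu).constr K g, fun i => by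
      rw [← Module.Basis.span_apply hu, Module.Basis.constr_basis]⟩

lemma exists_linearIndependent_of_not_finite_s14 (hE : ¬ Module.Finite K E) (ι : Type*)
    [Countable ι] : ∃ u : ι → E, LinearIndependent K u := by
  let b := Module.Basis.ofVectorSpace K E
  have : Infinite (Module.Basis.ofVectorSpaceIndex K E) :=
    not_finite_iff_infinite.1 fun _ => hE (Module.Finite.of_basis b)
  obtain ⟨g, hg⟩ := Countable.exists_injective_nat ι
  let j := Infinite.natEmbedding (Module.Basis.ofVectorSpaceIndex K E)
  exact ⟨b ∘ j ∘ g, b.linearIndependent.comp _ (j.injective.comp hg)⟩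

lemma not_finite_span_of_linearIndependent [Infinite ι] {u : ι → E} (hu : LinearIndependent K u)
    {s : Set E} (hs : range u ⊆ s) : ¬ Module.Finite K (span K s) := by
  intro
  refine Module.Finite.not_linearIndependent_of_infinite (R := K)
    (fun i => (⟨u i, subset_span (hs (mem_range_self i))⟩ : span K s)) ?_
  exact LinearIndependent.of_comp (span K s).subtype hu

lemma linearIndependent_of_notMem_span_Iio {f : ℕ → E} (h : ∀ n, f n ∉ span K (f '' Iio n)) :
    LinearIndependent K f := by
  have hIio : ∀ n, LinearIndepOn K f (Iio n) := by
    intro n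
    induction n with
    | zero => simp
    | succ n ih =>
      rw [← Order.succ_eq_add_one, Order.Iio_succ, ← Iio_insert,
        linearIndepOn_insert self_notMem_Iio]
      exact ⟨ih, h n⟩
  rw [← linearIndepOn_univ_iff]
  refine linearIndepOn_of_finite _ fun t _ ht => ?_
  obtain ⟨n, hn⟩ := ht.bddAbove
  exact (hIio (n + 1)).mono fun k hk => Nat.lt_succ_of_le (hn hk)

lemma linearIndependent_of_shift {f : ℕ → E} (T : E →ₗ[K] E) (hT : ∀ n, T (f n) = f (n + 1))
    (hf : ¬ Module.Finite K (span K (range f))) : LinearIndependent K f := by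
  refine linearIndependent_of_notMem_span_Iio fun N hN => hf ?_
  set S := span K (f '' Iio N)
  have hTS : S ≤ S.comap T := by
    refine span_le.2 ?_
    rintro _ ⟨j, hj, rfl⟩
    rw [SetLike.mem_coe, mem_comap, hT]
    rcases (Nat.succ_le_of_lt hj).lt_or_eq with hlt | heq
    · exact subset_span ⟨j + 1, hlt, rfl⟩
    · rw [show j + 1 = N from heq]
      exact hN
  have hall : ∀ m, f m ∈ S := by
    intro m
    induction m with
    | zero =>
      rcases N.eq_zero_or_pos with rfl | hpos
      exacts [hN, subset_span ⟨0, hpos, rfl⟩]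
    | succ m ih => exact hT m ▸ hTS ih
  have : FiniteDimensional K S := FiniteDimensional.span_of_finite K ((finite_Iio N).image f)
  exact Submodule.finiteDimensional_of_le (span_le.2 (range_subset_iff.2 hall))

variable (K E) in
/-- Condition (1), with the operator given on all of `E` rather than on the span of the family;
over a field the two readings agree by `exists_linearMap_span_iff`. -/
def ForcesLinearIndependent (φ : ι → ι) : Prop :=
  ∀ e : ι → E, (∃ T : E →ₗ[K] E, ∀ i, T (e i) = e (φ i)) →
    ¬ Module.Finite K (span K (range e)) → LinearIndependent K e

variable {φ : ι → ι}

lemma ForcesLinearIndependent.injective [Infinite ι] {u : ι → E} (hu : LinearIndependent K u)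
    (hφ : ForcesLinearIndependent K E φ) : Injective φ := by
  classical
  intro x y hxy
  by_contra hne
  set σ := update id y x
  have hφσ : ∀ i, φ (σ i) = φ i := by
    intro i
    rcases eq_or_ne i y with rfl | hi
    · simp [σ, hxy]
    · simp [σ, hi]
  obtain ⟨T, hT⟩ := hu.exists_linearMap fun j => u (σ (φ j))
  have : Infinite ({y}ᶜ : Set ι) := (finite_singleton y).infinite_compl.to_subtype
  have hspan : ¬ Module.Finite K (span K (range (u ∘ σ))) := by
    refine not_finite_span_of_linearIndependent
      (hu.comp ((↑) : ({y}ᶜ : Set ι) → ι) Subtype.val_injective) ?_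
    rintro _ ⟨⟨i, hi⟩, rfl⟩
    exact ⟨i, by simp [σ, update_of_ne (mem_compl_singleton_iff.1 hi)]⟩
  have hli := hφ (u ∘ σ) ⟨T, fun i => by simp [hT, hφσ]⟩ hspan
  exact hne (hli.injective (by simp [σ, update_of_ne hne]))

lemma ForcesLinearIndependent.finite_compl_range_iterate {u : ι → E}
    (hu : LinearIndependent K u) (hφ : ForcesLinearIndependent K E φ) (a : ι) :
    (range fun n => φ^[n] a)ᶜ.Finite := by
  by_contra hinf
  set S := range fun n => φ^[n] a
  have hS : ∀ i ∈ S, φ i ∈ S := by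
    rintro _ ⟨n, rfl⟩
    exact ⟨n + 1, iterate_succ_apply' φ n a⟩
  set e := Sᶜ.indicator u
  obtain ⟨T, hT⟩ := hu.exists_linearMap fun j => e (φ j)
  have hTe : ∀ i, T (e i) = e (φ i) := by
    intro i
    by_cases hi : i ∈ S
    · simp [e, hi, hS i hi]
    · simp [e, hi, hT]
  have : Infinite (Sᶜ : Set ι) := Set.Infinite.to_subtype hinf
  have hspan : ¬ Module.Finite K (span K (range e)) := by
    refine not_finite_span_of_linearIndependent
      (hu.comp ((↑) : (Sᶜ : Set ι) → ι) Subtype.val_injective) ?_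
    rintro _ ⟨⟨i, hi⟩, rfl⟩
    exact ⟨i, indicator_of_mem hi u⟩
  exact (hφ e ⟨T, hTe⟩ hspan).ne_zero a (indicator_of_notMem (not_not.2 ⟨0, rfl⟩) u)

lemma forcesLinearIndependent_of_range_iterate_eq_univ [Infinite ι] {a : ι}
    (ha : range (fun n => φ^[n] a) = univ) : ForcesLinearIndependent K E φ := by
  rintro e ⟨T, hT⟩ hfin
  let q : ℕ ≃ ι := Equiv.ofBijective _
    ⟨injective_iterate_of_infinite_range (ha ▸ infinite_univ), range_eq_univ.1 ha⟩
  have hrange : range (e ∘ q) = range e := EquivLike.range_comp e q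
  rw [← linearIndependent_equiv q]
  refine linearIndependent_of_shift T (fun n => ?_) (hrange ▸ hfin)
  show T (e (φ^[n] a)) = e (φ^[n + 1] a)
  rw [hT, iterate_succ_apply']

theorem forcesLinearIndependent_iff_exists_range_iterate_eq_univ [Countable ι] [Infinite ι]
    (hE : ¬ Module.Finite K E) :
    ForcesLinearIndependent K E φ ↔ ∃ a, range (fun n => φ^[n] a) = univ := by
  refine ⟨fun hφ => ?_, fun ⟨_, ha⟩ => forcesLinearIndependent_of_range_iterate_eq_univ ha⟩
  obtain ⟨u, hu⟩ := exists_linearIndependent_of_not_finite_s14 hE ι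
  exact exists_range_iterate_eq_univ (hφ.finite_compl_range_iterate hu) (hφ.injective hu)

end LinearAlgebra

theorem stmt_14 {K : Type*} [Field K] {E : Type*} [AddCommGroup E] [Module K E]
    (hE : ¬ Module.Finite K E)
    {I : Type*} [Countable I] [Infinite I]
    (φ : I → I) :
    (∀ e : I → E,
      (∃ T : ↥(Submodule.span K (Set.range e)) →ₗ[K] E,
        ∀ i : I, T ⟨e i, Submodule.subset_span (Set.mem_range_self i)⟩ = e (φ i)) →
      ¬ Module.Finite K ↥(Submodule.span K (Set.range e)) →
      LinearIndependent K e) ↔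
    (∃ a : I, Set.range (fun n : ℕ => φ^[n] a) = Set.univ) := by
  simp only [exists_linearMap_span_iff]
  exact forcesLinearIndependent_iff_exists_range_iterate_eq_univ hE
end

section
/- Let E be an infinite-dimensional vector space and (e_i)_{i∈I} a family in E indexed by an infinite set I. Suppose there exists a ∈ I such that the family is constant zero on Orb_φ(a) for some map φ : I → I with I \ Orb_φ(a) infinite, and the family restricted to I \ Orb_φ(a) is a linearly independent family spanning an infinite-dimensional space. Then there exists a linear operator T : span{e_i}_{i∈I} → E with T(e_i) = e_{φ(i)} for all i∈I, span{e_i}_{i∈I} is infinite-dimensional, and (e_i)_{i∈I} is not linearly independent. -/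
open Submodule Set

theorem Function.mapsTo_range_iterate {α : Type*} (φ : α → α) (a : α) :
    MapsTo φ (range fun n : ℕ => φ^[n] a) (range fun n : ℕ => φ^[n] a) := by
  rintro _ ⟨n, rfl⟩
  exact ⟨n + 1, Function.iterate_succ_apply' φ n a⟩

section VanishingFamily

variable {K : Type*} [Field K] {M N : Type*} [AddCommGroup M] [Module K M]
  [AddCommGroup N] [Module K N] {ι : Type*} {e : ι → M} {t : Set ι}

theorem span_range_eq_span_image_compl (hzero : ∀ i ∈ t, e i = 0) :
    span K (range e) = span K (e '' tᶜ) := by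
  refine le_antisymm (span_le.mpr ?_) (span_mono (image_subset_range e _))
  rintro _ ⟨i, rfl⟩
  by_cases hi : i ∈ t
  · rw [hzero i hi]
    exact zero_mem _
  · exact subset_span ⟨i, hi, rfl⟩

theorem exists_linearMap_span_range_apply (hzero : ∀ i ∈ t, e i = 0)
    (hind : LinearIndependent K fun i : ↥tᶜ => e i) (f : ι → N) (hf : ∀ i ∈ t, f i = 0) :
    ∃ T : span K (range e) →ₗ[K] N,
      ∀ i, T ⟨e i, subset_span (mem_range_self i)⟩ = f i := by
  have hspan : span K (range e) = span K (range fun i : ↥tᶜ => e i) := by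
    rw [span_range_eq_span_image_compl hzero, image_eq_range]
  refine ⟨(Module.Basis.span hind).constr K (fun i => f i) ∘ₗ
    (LinearEquiv.ofEq _ _ hspan).toLinearMap, fun i => ?_⟩
  by_cases hi : i ∈ t
  · have : (⟨e i, subset_span (mem_range_self i)⟩ : span K (range e)) = 0 :=
      Subtype.ext (hzero i hi)
    rw [this, map_zero, hf i hi]
  · have hbasis : Module.Basis.span hind ⟨i, hi⟩ = LinearEquiv.ofEq _ _ hspan
        ⟨e i, subset_span (mem_range_self i)⟩ :=
      Module.Basis.span_apply hind ⟨i, hi⟩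
    rw [LinearMap.comp_apply, LinearEquiv.coe_coe, ← hbasis, Module.Basis.constr_basis]

end VanishingFamily

theorem stmt_15_general {K : Type*} [Field K] {E : Type*} [AddCommGroup E] [Module K E]
    {I : Type*}
    (e : I → E) (φ : I → I) (a : I)
    (hzero : ∀ i ∈ Set.range (fun n : ℕ => φ^[n] a), e i = 0)
    (hind : LinearIndependent K
      (fun i : ↥((Set.range fun n : ℕ => φ^[n] a)ᶜ) => e (i : I)))
    (hspan : ¬ Module.Finite K
      ↥(Submodule.span K (e '' ((Set.range fun n : ℕ => φ^[n] a)ᶜ)))) :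
    (∃ T : ↥(Submodule.span K (Set.range e)) →ₗ[K] E,
      ∀ i : I, T ⟨e i, Submodule.subset_span (Set.mem_range_self i)⟩ = e (φ i)) ∧
    ¬ Module.Finite K ↥(Submodule.span K (Set.range e)) ∧
    ¬ LinearIndependent K e := by
  refine ⟨exists_linearMap_span_range_apply hzero hind (e ∘ φ)
      fun i hi => hzero _ (Function.mapsTo_range_iterate φ a hi), ?_,
    fun hli => hli.ne_zero a (hzero a ⟨0, rfl⟩)⟩
  rwa [span_range_eq_span_image_compl hzero]

theorem stmt_15 {K : Type*} [Field K] {E : Type*} [AddCommGroup E] [Module K E]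
    (hE : ¬ Module.Finite K E)
    {I : Type*} [Infinite I]
    (e : I → E) (φ : I → I) (a : I)
    (horbc : (Set.range fun n : ℕ => φ^[n] a)ᶜ.Infinite)
    (hzero : ∀ i ∈ Set.range (fun n : ℕ => φ^[n] a), e i = 0)
    (hind : LinearIndependent K
      (fun i : ↥((Set.range fun n : ℕ => φ^[n] a)ᶜ) => e (i : I)))
    (hspan : ¬ Module.Finite K
      ↥(Submodule.span K (e '' ((Set.range fun n : ℕ => φ^[n] a)ᶜ)))) :
    (∃ T : ↥(Submodule.span K (Set.range e)) →ₗ[K] E,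
      ∀ i : I, T ⟨e i, Submodule.subset_span (Set.mem_range_self i)⟩ = e (φ i)) ∧
    ¬ Module.Finite K ↥(Submodule.span K (Set.range e)) ∧
    ¬ LinearIndependent K e :=
  stmt_15_general e φ a hzero hind hspan
end

section
/- Let E be a complex vector space, V a finite-dimensional subspace of E, (e_i)_{i∈I} a family in E, and J an infinite set. Suppose: (1) there are functions u : 𝒫_{ω,*}(I) → I and G : 𝒫_{ω,*}(I) → 𝒫_{ω,*}(I) with u(I*) ∈ I* and I* ⊆ G(I*) for all nonempty finite I* ⊆ I; (2) for each nonempty finite I* ⊆ I and j ∈ J there is a linear operator T(I*,j) : span{e_i : i ∈ G(I*)} → E; (3) there is a finite J₀ ⊆ J and a relation R on J with R[j] ⊆ J₀ for all j ∈ J₀, and for every j ∈ J there is n_j ∈ ℕ with R^{n_j}[j] ⊆ J₀; (4) for every nonempty finite I* ⊆ I, the span of {T(I*,j)(e_{u(I*)}) : j ∈ J} is infinite-dimensional; (5) for every nonempty finite I* ⊆ I, j ∈ J, and i ∈ G(I*) \ {u(I*)}, T(I*,j)(e_i) ∈ span{T(I*,j')(e_{i'}) : j' ∈ R[j], i' ∈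 G(I*)} + V. Then (e_i)_{i∈I} is linearly independent. -/
/-- `relPow R n` is the `n`-fold relational composition of `R` with itself,
with `relPow R 0` the identity relation, following `Rⁿ = R ∘ Rⁿ⁻¹`. -/
def relPow {J : Type*} (R : J → J → Prop) : ℕ → J → J → Prop
  | 0 => Eq
  | n + 1 => fun x z => ∃ y, R x y ∧ relPow R n y z

theorem stmt_16 {E : Type*} [AddCommGroup E] [Module ℂ E]
    (V : Submodule ℂ E) (hV : FiniteDimensional ℂ V)
    {I : Type*} (e : I → E)
    {J : Type*} [Infinite J]
    (u : Finset I → I) (G : Finset I → Finset I)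
    (h1 : ∀ s : Finset I, s.Nonempty → u s ∈ s ∧ s ⊆ G s)
    (T : ∀ s : Finset I, J → (↥(Submodule.span ℂ (e '' ↑(G s))) →ₗ[ℂ] E))
    (R : J → J → Prop) (J₀ : Finset J)
    (h3a : ∀ j ∈ J₀, ∀ j' : J, R j j' → j' ∈ J₀)
    (h3b : ∀ j : J, ∃ n : ℕ, ∀ j' : J, relPow R n j j' → j' ∈ J₀)
    (h4 : ∀ s : Finset I, s.Nonempty →
      ∀ hmem : e (u s) ∈ Submodule.span ℂ (e '' ↑(G s)),
      ¬ Module.Finite ℂ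
        ↥(Submodule.span ℂ (Set.range fun j : J => T s j ⟨e (u s), hmem⟩)))
    (h5 : ∀ s : Finset I, s.Nonempty → ∀ j : J, ∀ i ∈ G s, i ≠ u s →
      ∀ hmem : e i ∈ Submodule.span ℂ (e '' ↑(G s)),
      T s j ⟨e i, hmem⟩ ∈
        Submodule.span ℂ
          {x : E | ∃ (j' : J) (i' : I)
            (hm : e i' ∈ Submodule.span ℂ (e '' ↑(G s))),
            R j j' ∧ i' ∈ G s ∧ T s j' ⟨e i', hm⟩ = x} ⊔ V) :
    LinearIndependent ℂ e := by
  classical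
  rw [linearIndependent_iff]
  intro l hl
  by_contra hlne
  set s := l.support with hs
  have hsne : s.Nonempty := Finsupp.support_nonempty_iff.2 hlne
  obtain ⟨hus, hsub⟩ := h1 s hsne
  have hc : l (u s) ≠ 0 := Finsupp.mem_support_iff.1 hus
  set P := Submodule.span ℂ (e '' ↑(G s)) with hP
  have hmemG : ∀ i ∈ G s, e i ∈ P := fun i hi =>
    Submodule.subset_span ⟨i, by simpa using hi, rfl⟩
  let f : I → P := fun i => if h : i ∈ G s then ⟨e i, hmemG i h⟩ else 0
  have hfval : ∀ i ∈ G s, (f i : E) = e i := fun i hi => by simp [f, dif_pos hi]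
  have hsum : ∑ i ∈ s, l i • e i = 0 := by
    rw [Finsupp.linearCombination_apply, Finsupp.sum] at hl; exact hl
  have hrep : ∀ hm : e (u s) ∈ P,
      (⟨e (u s), hm⟩ : P) = ∑ i ∈ s.erase (u s), (-(l i / l (u s))) • f i := by
    intro hm
    apply Subtype.ext
    have hcoe : (↑(∑ i ∈ s.erase (u s), (-(l i / l (u s))) • f i) : E)
        = ∑ i ∈ s.erase (u s), (-(l i / l (u s))) • e i := by
      push_cast
      exact Finset.sum_congr rfl fun i hi => by
        rw [hfval i (hsub (Finset.mem_of_mem_erase hi))]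
    rw [hcoe]
    have h2 : l (u s) • e (u s) + ∑ i ∈ s.erase (u s), l i • e i = 0 := by
      rw [Finset.add_sum_erase s (fun i => l i • e i) hus]; exact hsum
    have h3 : l (u s) • e (u s) = ∑ i ∈ s.erase (u s), -(l i • e i) := by
      rw [Finset.sum_neg_distrib]
      exact eq_neg_of_add_eq_zero_left h2
    calc (e (u s) : E) = (l (u s))⁻¹ • (l (u s) • e (u s)) := (inv_smul_smul₀ hc _).symm
      _ = ∑ i ∈ s.erase (u s), (l (u s))⁻¹ • (-(l i • e i)) := by
          rw [h3, Finset.smul_sum]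
      _ = ∑ i ∈ s.erase (u s), (-(l i / l (u s))) • e i :=
          Finset.sum_congr rfl fun i _ => by
            rw [smul_neg, smul_smul, ← neg_smul, div_eq_inv_mul]
  set W := Submodule.span ℂ {x : E | ∃ j' ∈ J₀, ∃ i' ∈ G s, ∃ hm : e i' ∈ P,
      T s j' ⟨e i', hm⟩ = x} ⊔ V with hWdef
  have hVW : V ≤ W := le_sup_right
  have key : ∀ n : ℕ, ∀ j : J, (∀ j', relPow R n j j' → j' ∈ J₀) →
      ∀ i ∈ G s, ∀ hm : e i ∈ P, T s j ⟨e i, hm⟩ ∈ W := by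
    intro n
    induction n with
    | zero =>
      intro j hj i hi hm
      exact Submodule.mem_sup_left (Submodule.subset_span ⟨j, hj j rfl, i, hi, hm, rfl⟩)
    | succ n ih =>
      intro j hj
      have hne : ∀ i ∈ G s, i ≠ u s → ∀ hm : e i ∈ P, T s j ⟨e i, hm⟩ ∈ W := by
        intro i hi hiu hm
        have h5' := h5 s hsne j i hi hiu hm
        refine SetLike.le_def.1 ?_ h5'
        refine sup_le ?_ hVW
        rw [Submodule.span_le]
        rintro x ⟨j', i', hm', hR, hi', rfl⟩
        exact ih j' (fun j'' h => hj j'' ⟨j', hR, h⟩) i' hi' hm'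
      intro i hi hm
      by_cases hiu : i = u s
      · subst hiu
        rw [hrep hm, map_sum]
        refine Submodule.sum_mem _ fun i' hi' => ?_
        rw [map_smul]
        refine Submodule.smul_mem _ _ ?_
        have hi'G : i' ∈ G s := hsub (Finset.mem_of_mem_erase hi')
        have hfi : f i' = ⟨e i', hmemG i' hi'G⟩ := dif_pos hi'G
        rw [hfi]
        exact hne i' hi'G (Finset.ne_of_mem_erase hi') _
      · exact hne i hi hiu hm
  have hmU : e (u s) ∈ P := hmemG (u s) (hsub hus)
  have hle : Submodule.span ℂ (Set.range fun j : J => T s j ⟨e (u s), hmU⟩) ≤ W := by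
    rw [Submodule.span_le]
    rintro x ⟨j, rfl⟩
    obtain ⟨n, hn⟩ := h3b j
    exact key n j hn (u s) (hsub hus) hmU
  have hSfin : Set.Finite {x : E | ∃ j' ∈ J₀, ∃ i' ∈ G s, ∃ hm : e i' ∈ P,
      T s j' ⟨e i', hm⟩ = x} := by
    apply Set.Finite.subset (Set.Finite.image
      (fun p : J × I => if h : e p.2 ∈ P then T s p.1 ⟨e p.2, h⟩ else 0)
      (Set.Finite.prod J₀.finite_toSet (G s).finite_toSet))
    rintro x ⟨j', hj', i', hi', hm', rfl⟩
    exact ⟨(j', i'), ⟨hj', hi'⟩, by simp [dif_pos hm']⟩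
  have hspanfin : FiniteDimensional ℂ (Submodule.span ℂ {x : E | ∃ j' ∈ J₀, ∃ i' ∈ G s,
      ∃ hm : e i' ∈ P, T s j' ⟨e i', hm⟩ = x}) := FiniteDimensional.span_of_finite ℂ hSfin
  have hWfin : FiniteDimensional ℂ W := by
    rw [hWdef]
    exact Submodule.finiteDimensional_sup _ _
  exact h4 s hsne hmU (Submodule.finiteDimensional_of_le hle)
end

section
/- Let σ be an algebraic signature, 𝒜 = (A, σ) a σ-structure, and (e_n)_{n∈ℕ} a sequence in A with a σ-endomorphism f of A satisfying f(e_n) = e_{n+1} for all n. If for every m ∈ ℕ there exists k ≥ m with e_k ∉ Terms^𝒜[e_0,…,e_{m−1}], then e_m ∉ Terms^𝒜[e_0,…,e_{m−1}] for every m ∈ ℕ. -/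
open FirstOrder

theorem stmt_19 (L : Language) [∀ n, IsEmpty (L.Relations n)]
    {A : Type*} [L.Structure A]
    (e : ℕ → A) (f : L.Hom A A)
    (hf : ∀ n : ℕ, f (e n) = e (n + 1))
    (h : ∀ m : ℕ, ∃ k : ℕ, m ≤ k ∧
      e k ∉ Language.Substructure.closure L (e '' {i : ℕ | i < m})) :
    ∀ m : ℕ, e m ∉ Language.Substructure.closure L (e '' {i : ℕ | i < m}) := by
  intro m hm
  set C := Language.Substructure.closure L (e '' {i : ℕ | i < m}) with hC
  have hgen : ∀ i, i < m → e i ∈ C :=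
    fun i hi => Language.Substructure.subset_closure (L := L) ⟨i, hi, rfl⟩
  have hle : C ≤ C.comap f := by
    rw [hC, Language.Substructure.closure_le]
    rintro x ⟨i, hi, rfl⟩
    simp only [SetLike.mem_coe, Language.Substructure.mem_comap, hf]
    rcases lt_or_eq_of_le (Nat.succ_le_of_lt hi) with h' | h'
    · exact hgen _ h'
    · rw [show i + 1 = m from h']; exact hm
  have key : ∀ k, m ≤ k → e k ∈ C := by
    intro k hk
    induction k with
    | zero => exact Nat.le_zero.mp hk ▸ hm
    | succ n ih =>
      rcases Nat.lt_or_ge m (n + 1) with h' | h'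
      · have := hle (ih (Nat.lt_succ_iff.mp h'))
        rw [Language.Substructure.mem_comap, hf] at this
        exact this
      · exact Nat.le_antisymm hk h' ▸ hm
  obtain ⟨k, hk, hk'⟩ := h m
  exact hk' (key k hk)
end
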